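/- On an almost Golden Riemannian manifold, the torsion T⁰ of the first canonical connection ∇⁰_X Y = ∇^g_X Y − (1/2)(∇^g_X J_φ)(J_φ Y) satisfies T⁰(J_φ X, J_φ Y) + T⁰(X, Y) = −(1/2) N_{J_φ}(X, Y) for all vector fields X, Y. -/

import Mathlib

/-- Nijenhuis tensor `N_A(X,Y) = A²[X,Y] + [AX,AY] − A[AX,Y] − A[X,AY]`. -/
def nijenhuis {V : Type*} [LieRing V] [LieAlgebra ℝ V] (A : V →ₗ[ℝ] V) (X Y : V) : V :=
  A (A ⁅X, Y⁆) + ⁅A X, A Y⁆ - A ⁅A X, Y⁆ - A ⁅X, A Y⁆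

/-- The induced almost product structure `J_φ = (1/√5)(2φ − Id)`. -/
noncomputable def inducedJ {V : Type*} [AddCommGroup V] [Module ℝ V] (φ : V →ₗ[ℝ] V) : V →ₗ[ℝ] V :=
  (Real.sqrt 5)⁻¹ • (2 • φ - LinearMap.id)

/-- The first canonical covariant derivative `∇⁰_X Y = ∇_X Y − (1/2)(∇_X J)(J Y)`. -/
noncomputable def firstCanonical {V : Type*} [AddCommGroup V] [Module ℝ V]
    (nab : V →ₗ[ℝ] V →ₗ[ℝ] V) (J : V →ₗ[ℝ] V) (X Y : V) : V :=
  nab X Y - ((1 : ℝ)/2) • (nab X (J (J Y)) - J (nab X (J Y)))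

/-- The torsion `T⁰(X,Y) = ∇⁰_X Y − ∇⁰_Y X − [X,Y]` of the first canonical connection. -/
noncomputable def torsion0 {V : Type*} [LieRing V] [LieAlgebra ℝ V]
    (nab : V →ₗ[ℝ] V →ₗ[ℝ] V) (J : V →ₗ[ℝ] V) (X Y : V) : V :=
  firstCanonical nab J X Y - firstCanonical nab J Y X - ⁅X, Y⁆

/-! Since `φ² = φ + 1` gives `(2φ - 1)² = 5`, `J_φ` is an involution, and for an involution
`∇⁰_X Y = ½ (∇_X Y + J ∇_X (J Y))`. In `T⁰(JX, JY) + T⁰(X, Y)` the `J`-parts then combine, by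
torsion-freeness, into `½ J ([JX, Y] + [X, JY])`, while the rest is `-½ ([X, Y] + [JX, JY])`. -/

theorem firstCanonical_of_involutive {V : Type*} [AddCommGroup V] [Module ℝ V]
    (nab : V →ₗ[ℝ] V →ₗ[ℝ] V) {J : V →ₗ[ℝ] V} (hJ : ∀ v, J (J v) = v) (X Y : V) :
    firstCanonical nab J X Y = ((1 : ℝ) / 2) • (nab X Y + J (nab X (J Y))) := by
  rw [firstCanonical, hJ]
  module

section Involutive

variable {V : Type*} [LieRing V] [LieAlgebra ℝ V] (nab : V →ₗ[ℝ] V →ₗ[ℝ] V) {J : V →ₗ[ℝ] V}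

theorem torsion0_of_involutive (hJ : ∀ v, J (J v) = v)
    (htf : ∀ X Y : V, nab X Y - nab Y X = ⁅X, Y⁆) (X Y : V) :
    torsion0 nab J X Y = ((1 : ℝ) / 2) • (J (nab X (J Y) - nab Y (J X)) - ⁅X, Y⁆) := by
  rw [torsion0, firstCanonical_of_involutive nab hJ, firstCanonical_of_involutive nab hJ,
    ← htf, map_sub]
  module

theorem nijenhuis_of_involutive (hJ : ∀ v, J (J v) = v) (X Y : V) :
    nijenhuis J X Y = ⁅X, Y⁆ + ⁅J X, J Y⁆ - J (⁅J X, Y⁆ + ⁅X, J Y⁆) := by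
  rw [nijenhuis, hJ, map_add]
  abel

theorem torsion0_add_torsion0_of_involutive (hJ : ∀ v, J (J v) = v)
    (htf : ∀ X Y : V, nab X Y - nab Y X = ⁅X, Y⁆) (X Y : V) :
    torsion0 nab J (J X) (J Y) + torsion0 nab J X Y = -(((1 : ℝ) / 2) • nijenhuis J X Y) := by
  have hbrackets : nab (J X) Y - nab (J Y) X + (nab X (J Y) - nab Y (J X))
      = ⁅J X, Y⁆ + ⁅X, J Y⁆ := by
    rw [← htf, ← htf]
    abel
  rw [torsion0_of_involutive nab hJ htf, torsion0_of_involutive nab hJ htf, hJ, hJ,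
    nijenhuis_of_involutive hJ, ← hbrackets, map_add]
  module

end Involutive

theorem inducedJ_inducedJ {V : Type*} [AddCommGroup V] [Module ℝ V] {φ : V →ₗ[ℝ] V}
    (hφ : φ ∘ₗ φ = φ + LinearMap.id) (v : V) : inducedJ φ (inducedJ φ v) = v := by
  have hφv : φ (φ v) = φ v + v := LinearMap.congr_fun hφ v
  have hsqrt : (Real.sqrt 5)⁻¹ * (Real.sqrt 5)⁻¹ = 1 / 5 := by
    rw [← mul_inv, Real.mul_self_sqrt (by norm_num)]
    norm_num
  simp only [inducedJ, LinearMap.smul_apply, LinearMap.sub_apply, LinearMap.id_apply, map_smul,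
    map_sub, map_nsmul, smul_sub, hφv]
  match_scalars
  · ring
  · linear_combination 5 * hsqrt

theorem torsion0_nijenhuis_general {V : Type*} [LieRing V] [LieAlgebra ℝ V]
    (φ : V →ₗ[ℝ] V) (hφ : φ ∘ₗ φ = φ + LinearMap.id)
    (nab : V →ₗ[ℝ] V →ₗ[ℝ] V)
    (htf : ∀ X Y : V, nab X Y - nab Y X = ⁅X, Y⁆) :
    ∀ X Y : V,
      torsion0 nab (inducedJ φ) (inducedJ φ X) (inducedJ φ Y) + torsion0 nab (inducedJ φ) X Y
        = -(((1 : ℝ)/2) • nijenhuis (inducedJ φ) X Y) :=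
  torsion0_add_torsion0_of_involutive nab (inducedJ_inducedJ hφ) htf

/-- On an almost Golden Riemannian manifold the torsion of the first canonical connection
satisfies `T⁰(J_φX, J_φY) + T⁰(X,Y) = −(1/2) N_{J_φ}(X,Y)`.  Here `nab` is the
Levi-Civita connection of `g` (torsion-free and metric, with vector fields acting on
functions `A` via derivations `Dv`). -/
theorem torsion0_nijenhuis {V A : Type*} [LieRing V] [LieAlgebra ℝ V]
    [CommRing A] [Algebra ℝ A]
    (φ : V →ₗ[ℝ] V) (hφ : φ ∘ₗ φ = φ + LinearMap.id)
    (g : V →ₗ[ℝ] V →ₗ[ℝ] A) (hsym : ∀ X Y : V, g X Y = g Y X)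
    (hpure : ∀ X Y : V, g (φ X) Y = g X (φ Y))
    (Dv : V → A →ₗ[ℝ] A) (hD : ∀ (X : V) (a b : A), Dv X (a * b) = a * Dv X b + b * Dv X a)
    (nab : V →ₗ[ℝ] V →ₗ[ℝ] V)
    (htf : ∀ X Y : V, nab X Y - nab Y X = ⁅X, Y⁆)
    (hmetric : ∀ X Y Z : V, Dv X (g Y Z) = g (nab X Y) Z + g Y (nab X Z)) :
    ∀ X Y : V,
      torsion0 nab (inducedJ φ) (inducedJ φ X) (inducedJ φ Y) + torsion0 nab (inducedJ φ) X Y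
        = -(((1 : ℝ)/2) • nijenhuis (inducedJ φ) X Y) :=
  torsion0_nijenhuis_general φ hφ nab htf
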